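/- arXiv:1702.03087 — 6 statements merged into one kernel-verified Lean document; each statement's English description precedes it below -/
import Mathlib

section
/- Let x and y be elements of the symmetric group S₄ on {1,2,3,4} such that x has order 2, y has order 3, and {x, y} generates S₄. Then there exists an automorphism σ of S₄ with σ(x) = (12) and σ(y) = (134). -/
set_option maxRecDepth 10000 in
lemma key_stmt_2 : ∀ x y : Equiv.Perm (Fin 4), x^2 = 1 → x ≠ 1 → y^3 = 1 → y ≠ 1 →
    (∃ g : Equiv.Perm (Fin 4), g * x * g⁻¹ = c[0,1] ∧ g * y * g⁻¹ = c[0,2,3]) ∨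
    (Equiv.Perm.sign x = 1) ∨ (∃ i : Fin 4, x i = i ∧ y i = i) := by decide

/-- If `{x, y}` generates `S₄` with `ord(x) = 2` and `ord(y) = 3`, then there is
an automorphism `σ` of `S₄` with `σ(x) = (12)` and `σ(y) = (134)`
(here `S₄` acts on `{0,1,2,3}`, shifting the labels by one). -/
theorem stmt_2 (x y : Equiv.Perm (Fin 4))
    (hx : orderOf x = 2) (hy : orderOf y = 3)
    (hgen : Subgroup.closure ({x, y} : Set (Equiv.Perm (Fin 4))) = ⊤) :
    ∃ σ : MulAut (Equiv.Perm (Fin 4)),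
      σ x = c[0, 1] ∧ σ y = c[0, 2, 3] := by
  have hx2 : x ^ 2 = 1 := by rw [← hx]; exact pow_orderOf_eq_one x
  have hy3 : y ^ 3 = 1 := by rw [← hy]; exact pow_orderOf_eq_one y
  have hx1 : x ≠ 1 := by intro h; rw [h, orderOf_one] at hx; omega
  have hy1 : y ≠ 1 := by intro h; rw [h, orderOf_one] at hy; omega
  rcases key_stmt_2 x y hx2 hx1 hy3 hy1 with ⟨g, h1, h2⟩ | hsx | ⟨i, hxi, hyi⟩
  · exact ⟨MulAut.conj g, h1, h2⟩
  · -- both even: closure ≤ alternating group, contradiction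
    exfalso
    have hsy : Equiv.Perm.sign y = 1 := by
      have h3 : (Equiv.Perm.sign y) ^ 3 = 1 := by
        rw [← map_pow, hy3, map_one]
      rcases Int.units_eq_one_or (Equiv.Perm.sign y) with h | h
      · exact h
      · exact absurd h3 (by rw [h]; decide)
    have hle : Subgroup.closure ({x, y} : Set (Equiv.Perm (Fin 4))) ≤
        alternatingGroup (Fin 4) := by
      rw [Subgroup.closure_le]
      intro z hz
      rcases hz with rfl | rfl
      · exact Equiv.Perm.mem_alternatingGroup.mpr hsx
      · exact Equiv.Perm.mem_alternatingGroup.mpr hsy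
    rw [hgen, top_le_iff] at hle
    have : Equiv.swap (0 : Fin 4) 1 ∈ alternatingGroup (Fin 4) := by
      rw [hle]; trivial
    rw [Equiv.Perm.mem_alternatingGroup, Equiv.Perm.sign_swap (by decide)] at this
    norm_num at this
  · -- common fixed point: closure ≤ stabilizer, contradiction
    exfalso
    have hle : Subgroup.closure ({x, y} : Set (Equiv.Perm (Fin 4))) ≤
        MulAction.stabilizer (Equiv.Perm (Fin 4)) i := by
      rw [Subgroup.closure_le]
      intro z hz
      rcases hz with rfl | rfl
      · exact hxi
      · exact hyi
    rw [hgen, top_le_iff] at hle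
    obtain ⟨j, hj⟩ := exists_ne i
    have hmem : Equiv.swap i j ∈ MulAction.stabilizer (Equiv.Perm (Fin 4)) i := by
      rw [hle]; trivial
    have : Equiv.swap i j i = i := hmem
    rw [Equiv.swap_apply_left] at this
    exact hj this
end

section
/- Let x and y be elements of the symmetric group S₄ on {1,2,3,4} such that x has order 2, y has order 4, and {x, y} generates S₄. Then there exists an automorphism σ of S₄ with σ(x) = (12) and σ(y) = (1234). -/
/-!
A 4-cycle `y` generates a non-normal subgroup of `S₄`, so the involution `x` of a generating pair
cannot normalize `⟨y⟩`. Up to conjugation `y = (0 1 2 3)`; the involutions outside its normalizer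
(the dihedral group of the square) are the four "edge" transpositions, and conjugation by powers
of `y` fixes `y` and permutes them transitively. As `S₄` is finite, both facts are checked by
exhaustion, and conjugation by the resulting element is the required automorphism.
-/

open Subgroup

section FiniteGroup

variable {G : Type*} [Group G] [Finite G]

theorem mem_zpowers_iff_exists_pow_of_lt_orderOf {y z : G} :
    z ∈ zpowers y ↔ ∃ k < orderOf y, y ^ k = z := by
  classical
  simp only [mem_zpowers_iff_mem_range_orderOf, Finset.mem_image, Finset.mem_range]

theorem mem_normalizer_zpowers_of_conj_mem {x y : G} (hxy : x * y * x⁻¹ ∈ zpowers y) :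
    x ∈ normalizer (zpowers y : Set G) := by
  refine mem_normalizer_fintype ?_
  rintro _ ⟨k, rfl⟩
  simpa only [SetLike.mem_coe, conj_zpow] using zpow_mem hxy k

theorem normal_zpowers_of_closure_pair_eq_top {x y : G} (hgen : closure {x, y} = ⊤)
    (hxy : x * y * x⁻¹ ∈ zpowers y) : (zpowers y).Normal := by
  rw [← normalizer_eq_top_iff, eq_top_iff, ← hgen, closure_le]
  rintro z (rfl | rfl)
  · exact mem_normalizer_zpowers_of_conj_mem hxy
  · exact le_normalizer (mem_zpowers z)

end FiniteGroup

theorem pow_four_eq_one_and_pow_two_ne_one {M : Type*} [Monoid M] {y : M} (hy : orderOf y = 4) :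
    y ^ 4 = 1 ∧ y ^ 2 ≠ 1 :=
  ⟨hy ▸ pow_orderOf_eq_one y, pow_ne_one_of_lt_orderOf two_ne_zero (by omega)⟩

namespace Equiv.Perm

set_option maxRecDepth 10000 in
theorem exists_conj_ne_pow_of_pow_four_eq_one :
    ∀ y : Perm (Fin 4), y ^ 4 = 1 → y ^ 2 ≠ 1 →
      ∃ g : Perm (Fin 4), ∀ k < 4, y ^ k ≠ g * y * g⁻¹ := by
  decide

set_option maxRecDepth 10000 in
theorem exists_conj_eq_swap_and_cycle_of_pow_four_eq_one :
    ∀ x y : Perm (Fin 4), x ^ 2 = 1 → x ≠ 1 → y ^ 4 = 1 → y ^ 2 ≠ 1 →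
      (∀ k < 4, y ^ k ≠ x * y * x⁻¹) →
      ∃ g : Perm (Fin 4), g * x * g⁻¹ = c[0, 1] ∧ g * y * g⁻¹ = c[0, 1, 2, 3] := by
  decide

theorem not_normal_zpowers_of_orderOf_eq_four {y : Perm (Fin 4)} (hy : orderOf y = 4) :
    ¬ (zpowers y).Normal := by
  intro hnormal
  obtain ⟨hy4, hy2⟩ := pow_four_eq_one_and_pow_two_ne_one hy
  obtain ⟨g, hg⟩ := exists_conj_ne_pow_of_pow_four_eq_one y hy4 hy2
  obtain ⟨k, hk, hyk⟩ := mem_zpowers_iff_exists_pow_of_lt_orderOf.mp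
    (hnormal.conj_mem y (mem_zpowers y) g)
  exact hg k (hy ▸ hk) hyk

theorem exists_conj_eq_swap_and_cycle {x y : Perm (Fin 4)} (hx : orderOf x = 2)
    (hy : orderOf y = 4) (hxy : x * y * x⁻¹ ∉ zpowers y) :
    ∃ g : Perm (Fin 4), g * x * g⁻¹ = c[0, 1] ∧ g * y * g⁻¹ = c[0, 1, 2, 3] := by
  obtain ⟨hx2, hx1⟩ := orderOf_eq_prime_iff.mp hx
  obtain ⟨hy4, hy2⟩ := pow_four_eq_one_and_pow_two_ne_one hy
  refine exists_conj_eq_swap_and_cycle_of_pow_four_eq_one x y hx2 hx1 hy4 hy2 fun k hk hyk => ?_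
  exact hxy (mem_zpowers_iff_exists_pow_of_lt_orderOf.mpr ⟨k, hy.symm ▸ hk, hyk⟩)

end Equiv.Perm

/-- If `{x, y}` generates `S₄` with `ord(x) = 2` and `ord(y) = 4`, then there is
an automorphism `σ` of `S₄` with `σ(x) = (12)` and `σ(y) = (1234)`
(here `S₄` acts on `{0,1,2,3}`, shifting the labels by one). -/
theorem stmt_3 (x y : Equiv.Perm (Fin 4))
    (hx : orderOf x = 2) (hy : orderOf y = 4)
    (hgen : Subgroup.closure ({x, y} : Set (Equiv.Perm (Fin 4))) = ⊤) :
    ∃ σ : MulAut (Equiv.Perm (Fin 4)),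
      σ x = c[0, 1] ∧ σ y = c[0, 1, 2, 3] := by
  have hxy : x * y * x⁻¹ ∉ zpowers y := fun hxy =>
    Equiv.Perm.not_normal_zpowers_of_orderOf_eq_four hy
      (normal_zpowers_of_closure_pair_eq_top hgen hxy)
  obtain ⟨g, hgx, hgy⟩ := Equiv.Perm.exists_conj_eq_swap_and_cycle hx hy hxy
  exact ⟨MulAut.conj g, hgx, hgy⟩
end

section
/- Let x and y be elements of the alternating group A₅ on {1,2,3,4,5} such that x has order 2, y has order 3, and {x, y} generates A₅. Then there exists an automorphism σ of A₅ with σ(x) = (12)(34) and σ(y) = (135). -/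
set_option maxRecDepth 10000
set_option maxHeartbeats 4000000

private lemma key : ∀ x y : ↥(alternatingGroup (Fin 5)),
    x ^ 2 = 1 → x ≠ 1 → y ^ 3 = 1 → y ≠ 1 →
    (∃ g : Equiv.Perm (Fin 5), g * (↑x : Equiv.Perm (Fin 5)) * g⁻¹ = c[0, 1] * c[2, 3] ∧
      g * (↑y : Equiv.Perm (Fin 5)) * g⁻¹ = c[0, 2, 4]) ∨
    (∃ s : Finset (Fin 5), 0 < s.card ∧ s.card < 5 ∧
      (∀ i ∈ s, (↑x : Equiv.Perm (Fin 5)) i ∈ s) ∧ (∀ i ∈ s, (↑y : Equiv.Perm (Fin 5)) i ∈ s)) := by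
  decide

private lemma key2 : ∀ s : Finset (Fin 5), 0 < s.card → s.card < 5 →
    ∃ g : ↥(alternatingGroup (Fin 5)), ∃ i ∈ s, (↑g : Equiv.Perm (Fin 5)) i ∉ s := by decide

private lemma image_eq {s : Finset (Fin 5)} {z : Equiv.Perm (Fin 5)}
    (h : ∀ i ∈ s, z i ∈ s) : s.image z = s := by
  apply Finset.eq_of_subset_of_card_le
  · intro i hi
    simp only [Finset.mem_image] at hi
    obtain ⟨j, hj, rfl⟩ := hi
    exact h j hj
  · rw [Finset.card_image_of_injective _ z.injective]

private lemma inv_stab {s : Finset (Fin 5)} {z : Equiv.Perm (Fin 5)}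
    (h : ∀ i ∈ s, z i ∈ s) : ∀ i ∈ s, z⁻¹ i ∈ s := by
  intro i hi
  rw [← image_eq h, Finset.mem_image] at hi
  obtain ⟨j, hj, rfl⟩ := hi
  simpa using hj

/-- If `{x, y}` generates `A₅` with `ord(x) = 2` and `ord(y) = 3`, then there is
an automorphism `σ` of `A₅` with `σ(x) = (12)(34)` and `σ(y) = (135)`
(here `A₅` acts on `{0,1,2,3,4}`, shifting the labels by one). -/
theorem stmt_4 (x y : ↥(alternatingGroup (Fin 5)))
    (hx : orderOf x = 2) (hy : orderOf y = 3)
    (hgen : Subgroup.closure ({x, y} : Set ↥(alternatingGroup (Fin 5))) = ⊤) :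
    ∃ σ : MulAut ↥(alternatingGroup (Fin 5)),
      (↑(σ x) : Equiv.Perm (Fin 5)) = c[0, 1] * c[2, 3] ∧
      (↑(σ y) : Equiv.Perm (Fin 5)) = c[0, 2, 4] := by
  have hx2 : x ^ 2 = 1 := by rw [← hx]; exact pow_orderOf_eq_one x
  have hy3 : y ^ 3 = 1 := by rw [← hy]; exact pow_orderOf_eq_one y
  have hx1 : x ≠ 1 := by intro h; rw [h, orderOf_one] at hx; norm_num at hx
  have hy1 : y ≠ 1 := by intro h; rw [h, orderOf_one] at hy; norm_num at hy
  rcases key x y hx2 hx1 hy3 hy1 with ⟨g, h1, h2⟩ | ⟨s, hs0, hs5, hxs, hys⟩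
  · refine ⟨MulAut.conjNormal g, ?_, ?_⟩
    · rw [MulAut.conjNormal_apply]; exact h1
    · rw [MulAut.conjNormal_apply]; exact h2
  · exfalso
    set H : Subgroup ↥(alternatingGroup (Fin 5)) :=
      { carrier := {z | ∀ i ∈ s, (↑z : Equiv.Perm (Fin 5)) i ∈ s}
        one_mem' := by intro i hi; simpa using hi
        mul_mem' := by
          intro a b ha hb i hi
          have := ha _ (hb i hi)
          simpa using this
        inv_mem' := by
          intro a ha
          exact inv_stab ha } with hH
    have hle : Subgroup.closure ({x, y} : Set ↥(alternatingGroup (Fin 5))) ≤ H := by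
      rw [Subgroup.closure_le]
      rintro z (rfl | rfl)
      · exact hxs
      · exact hys
    rw [hgen] at hle
    obtain ⟨g, i, hi, hgi⟩ := key2 s hs0 hs5
    exact hgi (hle (Subgroup.mem_top g) i hi)
end

section
/- Let x and y be elements of the alternating group A₅ on {1,2,3,4,5} such that x has order 2, y has order 5, and {x, y} generates A₅. Then there exists an automorphism σ of A₅ such that σ(y) = (12345) and σ(x) is either (12)(34) or (13)(24). -/
/-!
If `x` inverted `y` by conjugation, `⟨y⟩` would be normal in `⟨x, y⟩ = A₅`, impossible as `A₅` is
simple and not cyclic. The 5-cycle `y` is conjugate in `S₅` to `(0 1 2 3 4)`, and conjugation by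
an element of `S₅` restricts to an automorphism of `A₅`; after this conjugation `x` is a double
transposition not inverting `(0 1 2 3 4)`, and a further conjugation by a power of `(0 1 2 3 4)`
brings it to `(0 1)(2 3)` or `(0 2)(1 3)`.
-/

open Equiv Perm Subgroup

theorem zpowers_normal_of_closure_eq_top_of_conj_eq_inv {G : Type*} [Group G] {x y : G}
    (hgen : closure {x, y} = ⊤) (hxy : x * y * x⁻¹ = y⁻¹) : (zpowers y).Normal := by
  have hx : x ∈ normalizer (zpowers y : Set G) := by
    rw [mem_normalizer_iff_map_conj_eq, MonoidHom.map_zpowers]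
    simp [MulAut.conj_apply, hxy]
  have hy : y ∈ normalizer (zpowers y : Set G) := le_normalizer (mem_zpowers y)
  rw [← normalizer_eq_top_iff, eq_top_iff, ← hgen, closure_le]
  rintro z (rfl | rfl) <;> assumption

theorem IsSimpleGroup.conj_ne_inv_of_closure_eq_top {G : Type*} [Group G] [IsSimpleGroup G]
    (hG : ¬IsCyclic G) {x y : G} (hgen : closure {x, y} = ⊤) (hy : y ≠ 1) :
    x * y * x⁻¹ ≠ y⁻¹ := by
  intro hxy
  rcases (zpowers_normal_of_closure_eq_top_of_conj_eq_inv hgen hxy).eq_bot_or_eq_top with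
    hbot | htop
  · exact hy (zpowers_eq_bot.mp hbot)
  · exact hG (isCyclic_iff_exists_zpowers_eq_top.mpr ⟨y, htop⟩)

theorem alternatingGroup_five_not_isCyclic : ¬IsCyclic (alternatingGroup (Fin 5)) := by
  intro h
  let _ := h.commGroup
  have := IsSimpleGroup.prime_card (α := alternatingGroup (Fin 5))
  rw [nat_card_alternatingGroup] at this
  norm_num at this

theorem isConj_fiveCycle_of_orderOf_eq_five {y : Perm (Fin 5)} (hy : orderOf y = 5) :
    IsConj y c[0, 1, 2, 3, 4] := by
  have hc : c[(0 : Fin 5), 1, 2, 3, 4] = finRotate 5 := by decide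
  have hcycle : y.IsCycle := isCycle_of_prime_order'' (by norm_num) (by simpa using hy)
  rw [hc]
  refine hcycle.isConj isCycle_finRotate ?_
  rw [← hcycle.orderOf, hy, support_finRotate, Finset.card_univ, Fintype.card_fin]

/- The fifteen even involutions of `Fin 5` form three orbits under conjugation by the powers of
`(0 1 2 3 4)`: the five reflections of the pentagon, which invert it, and the orbits of
`(0 1)(2 3)` and `(0 2)(1 3)`. -/
set_option maxRecDepth 100000 in
theorem even_involution_conj_fiveCycle_cases :
    ∀ z : Perm (Fin 5), sign z = 1 → z ^ 2 = 1 → z ≠ 1 →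
      z * c[0, 1, 2, 3, 4] * z⁻¹ = (c[0, 1, 2, 3, 4])⁻¹ ∨
      ∃ k : Fin 5,
        c[0, 1, 2, 3, 4] ^ (k : ℕ) * z * (c[0, 1, 2, 3, 4] ^ (k : ℕ))⁻¹ = c[0, 1] * c[2, 3] ∨
        c[0, 1, 2, 3, 4] ^ (k : ℕ) * z * (c[0, 1, 2, 3, 4] ^ (k : ℕ))⁻¹ = c[0, 2] * c[1, 3] := by
  decide

theorem exists_conj_eq_fiveCycle_and_doubleTransposition {x y : Perm (Fin 5)} (hx : sign x = 1)
    (hx2 : orderOf x = 2) (hy : orderOf y = 5) (hxy : x * y * x⁻¹ ≠ y⁻¹) :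
    ∃ g : Perm (Fin 5), g * y * g⁻¹ = c[0, 1, 2, 3, 4] ∧
      (g * x * g⁻¹ = c[0, 1] * c[2, 3] ∨ g * x * g⁻¹ = c[0, 2] * c[1, 3]) := by
  obtain ⟨g, hg⟩ := isConj_iff.mp (isConj_fiveCycle_of_orderOf_eq_five hy)
  obtain ⟨hx_sq, hx_ne⟩ := orderOf_eq_prime_iff.mp hx2
  have hsign : sign (g * x * g⁻¹) = 1 := by
    rw [Perm.sign_mul, Perm.sign_mul, Perm.sign_inv, hx, mul_one, Int.units_mul_self]
  have hsq : (g * x * g⁻¹) ^ 2 = 1 := by rw [conj_pow, hx_sq, mul_one, mul_inv_cancel]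
  have hne : g * x * g⁻¹ ≠ 1 := by rwa [Ne, conj_eq_one_iff]
  rcases even_involution_conj_fiveCycle_cases _ hsign hsq hne with hinv | ⟨k, hk⟩
  · refine absurd ?_ hxy
    rw [← hg] at hinv
    have hconj : g * (x * y * x⁻¹) * g⁻¹ = g * y⁻¹ * g⁻¹ :=
      calc g * (x * y * x⁻¹) * g⁻¹ = g * x * g⁻¹ * (g * y * g⁻¹) * (g * x * g⁻¹)⁻¹ := by group
        _ = (g * y * g⁻¹)⁻¹ := hinv
        _ = g * y⁻¹ * g⁻¹ := by group
    exact mul_left_cancel (mul_right_cancel hconj)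
  · set σ : Perm (Fin 5) := c[0, 1, 2, 3, 4]
    refine ⟨σ ^ (k : ℕ) * g, ?_, by simpa only [mul_inv_rev, mul_assoc] using hk⟩
    calc σ ^ (k : ℕ) * g * y * (σ ^ (k : ℕ) * g)⁻¹ = σ ^ (k : ℕ) * σ * (σ ^ (k : ℕ))⁻¹ := by
          rw [← hg]; group
      _ = σ := by rw [← pow_succ, pow_succ', mul_inv_cancel_right]

/-- If `{x, y}` generates `A₅` with `ord(x) = 2` and `ord(y) = 5`, then there is
an automorphism `σ` of `A₅` with `σ(y) = (12345)` and `σ(x)` equal to either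
`(12)(34)` or `(13)(24)` (here `A₅` acts on `{0,1,2,3,4}`, shifting labels by one). -/
theorem stmt_5 (x y : ↥(alternatingGroup (Fin 5)))
    (hx : orderOf x = 2) (hy : orderOf y = 5)
    (hgen : Subgroup.closure ({x, y} : Set ↥(alternatingGroup (Fin 5))) = ⊤) :
    ∃ σ : MulAut ↥(alternatingGroup (Fin 5)),
      (↑(σ y) : Equiv.Perm (Fin 5)) = c[0, 1, 2, 3, 4] ∧
      ((↑(σ x) : Equiv.Perm (Fin 5)) = c[0, 1] * c[2, 3] ∨
        (↑(σ x) : Equiv.Perm (Fin 5)) = c[0, 2] * c[1, 3]) := by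
  have hxy : x * y * x⁻¹ ≠ y⁻¹ := IsSimpleGroup.conj_ne_inv_of_closure_eq_top
    alternatingGroup_five_not_isCyclic hgen (by rintro rfl; simp at hy)
  obtain ⟨g, hgy, hgx⟩ := exists_conj_eq_fiveCycle_and_doubleTransposition x.2
    (by rwa [orderOf_coe]) (by rwa [orderOf_coe]) (by exact_mod_cast hxy)
  exact ⟨MulAut.conjNormal g, by rwa [MulAut.conjNormal_apply],
    by simpa only [MulAut.conjNormal_apply] using hgx⟩
end

section
/- Let x and y be elements of the alternating group A₅ on {1,2,3,4,5} such that both x and y have order 3 and {x, y} generates A₅. Then there exists an automorphism σ of A₅ with {σ(x), σ(y)} = {(123), (145)} (as an unordered pair). -/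
set_option maxRecDepth 100000 in
set_option maxHeartbeats 4000000 in
private lemma key_A5 : ∀ x y : ↥(alternatingGroup (Fin 5)),
    x^3 = 1 → x ≠ 1 → y^3 = 1 → y ≠ 1 →
    (∃ g : Equiv.Perm (Fin 5),
      (g * (x : Equiv.Perm (Fin 5)) * g⁻¹ = c[0,1,2] ∧
        g * (y : Equiv.Perm (Fin 5)) * g⁻¹ = c[0,3,4]) ∨
      (g * (x : Equiv.Perm (Fin 5)) * g⁻¹ = c[0,3,4] ∧
        g * (y : Equiv.Perm (Fin 5)) * g⁻¹ = c[0,1,2])) ∨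
    (∃ a : Fin 5, (x : Equiv.Perm (Fin 5)) a = a ∧ (y : Equiv.Perm (Fin 5)) a = a) := by
  decide

/-- If `{x, y}` generates `A₅` with `ord(x) = ord(y) = 3`, then there is an
automorphism `σ` of `A₅` with `{σ(x), σ(y)} = {(123), (145)}` as an unordered
pair (here `A₅` acts on `{0,1,2,3,4}`, shifting the labels by one). -/
theorem stmt_6 (x y : ↥(alternatingGroup (Fin 5)))
    (hx : orderOf x = 3) (hy : orderOf y = 3)
    (hgen : Subgroup.closure ({x, y} : Set ↥(alternatingGroup (Fin 5))) = ⊤) :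
    ∃ σ : MulAut ↥(alternatingGroup (Fin 5)),
      ({(↑(σ x) : Equiv.Perm (Fin 5)), (↑(σ y) : Equiv.Perm (Fin 5))} :
          Set (Equiv.Perm (Fin 5))) = {c[0, 1, 2], c[0, 3, 4]} := by
  have hx3 : x ^ 3 = 1 := by rw [← hx]; exact pow_orderOf_eq_one x
  have hy3 : y ^ 3 = 1 := by rw [← hy]; exact pow_orderOf_eq_one y
  have hx1 : x ≠ 1 := by intro h; rw [h, orderOf_one] at hx; norm_num at hx
  have hy1 : y ≠ 1 := by intro h; rw [h, orderOf_one] at hy; norm_num at hy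
  rcases key_A5 x y hx3 hx1 hy3 hy1 with ⟨g, hg⟩ | ⟨a, hxa, hya⟩
  · refine ⟨MulAut.conjNormal g, ?_⟩
    rcases hg with ⟨h1, h2⟩ | ⟨h1, h2⟩
    · rw [MulAut.conjNormal_apply, MulAut.conjNormal_apply, h1, h2]
    · rw [MulAut.conjNormal_apply, MulAut.conjNormal_apply, h1, h2, Set.pair_comm]
  · exfalso
    -- x, y fix a, so the whole group fixes a, contradicting e.g. finRotate 5.
    have hz : (⟨finRotate 5, by rw [Equiv.Perm.mem_alternatingGroup]; decide⟩ : ↥(alternatingGroup (Fin 5))) ∈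
        Subgroup.closure ({x, y} : Set ↥(alternatingGroup (Fin 5))) := by
      rw [hgen]; exact Subgroup.mem_top _
    have hfix : ∀ z : ↥(alternatingGroup (Fin 5)),
        z ∈ Subgroup.closure ({x, y} : Set ↥(alternatingGroup (Fin 5))) →
        (z : Equiv.Perm (Fin 5)) a = a := by
      intro z hz
      induction hz using Subgroup.closure_induction with
      | mem w hw =>
        rcases hw with hw | hw
        · rw [hw]; exact hxa
        · rw [hw]; exact hya
      | one => rfl
      | mul u v _ _ hu hv => simp [Subgroup.coe_mul, Equiv.Perm.mul_apply, hv, hu]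
      | inv u _ hu =>
        have : (u : Equiv.Perm (Fin 5))⁻¹ a = a := by
          conv_lhs => rw [← hu]
          simp
        simpa using this
    have hne : ∀ b : Fin 5, finRotate 5 b ≠ b := by decide
    exact hne a (hfix _ hz)
end

section
/- Let g ≥ 2, g' ≥ 0, k ≥ 0 and N ≥ 1 be integers with N > 2g - 2, and let q₁, ..., q_k be integers with each qᵢ ≥ 2. Suppose the Riemann–Hurwitz relation 2 - 2g = N(2 - 2g' - Σᵢ₌₁ᵏ (1 - 1/qᵢ)) holds (as rational numbers). Then 4g' + k ≤ 5. -/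
/-- Key numerical bound from the Riemann–Hurwitz formula: if `N > 2g - 2`,
`g ≥ 2`, `g' ≥ 0`, each `qᵢ ≥ 2`, and
`2 - 2g = N(2 - 2g' - Σᵢ (1 - 1/qᵢ))`, then `4g' + k ≤ 5`. -/
theorem stmt_12 (g g' N : ℤ) (k : ℕ) (q : Fin k → ℤ)
    (hg : 2 ≤ g) (hg' : 0 ≤ g') (hN1 : 1 ≤ N) (hN : N > 2 * g - 2)
    (hq : ∀ i, 2 ≤ q i)
    (hRH : (2 : ℚ) - 2 * (g : ℚ) =
      (N : ℚ) * (2 - 2 * (g' : ℚ) - ∑ i : Fin k, (1 - 1 / (q i : ℚ)))) :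
    4 * g' + (k : ℤ) ≤ 5 := by
  have hNpos : (0:ℚ) < (N:ℚ) := by exact_mod_cast hN1
  have hS : (k:ℚ)/2 ≤ ∑ i : Fin k, (1 - 1/(q i : ℚ)) := by
    calc (k:ℚ)/2 = ∑ _i : Fin k, (1/2 : ℚ) := by
          simp [Finset.sum_const]
          ring
      _ ≤ _ := by
          apply Finset.sum_le_sum
          intro i _
          have h2 : (2:ℚ) ≤ (q i : ℚ) := by exact_mod_cast hq i
          have : 1/(q i:ℚ) ≤ 1/2 := by
            apply one_div_le_one_div_of_le
            · norm_num
            · exact h2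
          linarith
  have key : (2:ℚ) - 2*(g':ℚ) - ∑ i : Fin k, (1 - 1/(q i:ℚ)) > -1 := by
    by_contra h
    push_neg at h
    have hmul : (N:ℚ) * (2 - 2*(g':ℚ) - ∑ i : Fin k, (1-1/(q i:ℚ))) ≤ (N:ℚ) * (-1) :=
      mul_le_mul_of_nonneg_left h (le_of_lt hNpos)
    have hN' : (N:ℚ) > 2*(g:ℚ) - 2 := by exact_mod_cast hN
    linarith
  have h6 : (4:ℚ)*(g':ℚ) + (k:ℚ) < 6 := by linarith
  have h6' : 4*g' + (k:ℤ) < 6 := by exact_mod_cast h6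
  linarith
end
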